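/- arXiv:1606.02926 — 2 statements merged into one kernel-verified Lean document; each statement's English description precedes it below -/
import Mathlib

section
/- Let G be a forest and (G, P⃗, 𝓛) a promise structure, where P⃗ = {p⃗_i : i ∈ I} and 𝓛 = {L_i : i ∈ I}. Then there exists a forest cl(G) containing G as an induced subgraph such that: (1) cl(G) is an 𝓛_q-extension of G, where 𝓛_q is the union of those L_i for which p⃗_i is not a placeholder-promise; (2) for every i ∈ I and every ℓ ∈ L_i, the rooted trees cl(G)(p⃗_i) and cl(G)(q⃗_ℓ) are isomorphic as rooted trees; and (3) cl(G) has the same maximum degree as G. -/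
/-- A leaf of a graph: a vertex with exactly one neighbour. -/
def IsLeaf {V : Type} (G : SimpleGraph V) (v : V) : Prop :=
  (G.neighborSet v).ncard = 1

/-- The vertex set of the component of `G − xy` containing `y`, i.e. the underlying
vertex set of the rooted tree `G(x→y)` (rooted at `y`). -/
def branchSet {V : Type} (G : SimpleGraph V) (x y : V) : Set V :=
  {z | (G.deleteEdges {s(x, y)}).Reachable y z}

/-- The rooted trees `G(x→y)` and `H(x'→y')` are isomorphic as rooted trees, i.e. there
is a graph isomorphism between the corresponding induced subgraphs mapping root `y` to
root `y'`. -/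
def BranchRootedIso {V W : Type} (G : SimpleGraph V) (x y : V)
    (H : SimpleGraph W) (x' y' : W) : Prop :=
  ∃ φ : G.induce (branchSet G x y) ≃g H.induce (branchSet H x' y'),
    ∀ h : y ∈ branchSet G x y, ((φ ⟨y, h⟩ : branchSet H x' y') : W) = y'

/-- The promise edge `p⃗ᵢ` is a placeholder-promise: the component `G(p⃗ᵢ)` consists of
a single leaf belonging to `Lᵢ`. -/
def IsPlaceholder {V I : Type} (G : SimpleGraph V) (p : I → V × V) (L : I → Set V)
    (i : I) : Prop :=
  (p i).2 ∈ L i ∧ branchSet G (p i).1 (p i).2 = {(p i).2}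

/-- `H` is an `L`-extension of the forest `G`, where `G` is included in `H` as an
induced subgraph via `ι`: every component of `H` contains precisely one component of
`G`, and every path in `H` from a vertex of `G` to a vertex outside `G` meets `L`. -/
def IsLeafExtension {V W : Type} (G : SimpleGraph V) (H : SimpleGraph W)
    (ι : V ↪ W) (L : Set V) : Prop :=
  (∀ a b : V, H.Adj (ι a) (ι b) ↔ G.Adj a b) ∧
  (∀ w : W, ∃ v : V, H.Reachable w (ι v)) ∧
  (∀ v v' : V, H.Reachable (ι v) (ι v') → G.Reachable v v') ∧
  (∀ w : W, w ∉ Set.range ι → ∀ g : V, ∀ q : H.Walk (ι g) w, q.IsPath →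
    ∃ l ∈ L, ι l ∈ q.support)

/-!
The closure glues, at every leaf `ℓ ∈ Lᵢ` of a promise `p⃗ᵢ` that is not a placeholder, a copy of
`G(p⃗ᵢ)` whose root is identified with `ℓ`, and then does the same at the copies of such leaves
inside the new copies, forever. A vertex is thus a chain of labels naming the copy it lies in,
together with the vertex of `G` it copies.

Each copy carries a retraction of the closure onto it, which collapses whatever is glued into the
copy to the leaf carrying it. The retraction sends every edge to an edge of `G` or to a point, and
only edges of the copy, on which it is injective, survive; so each edge of the closure, lying in
some copy, is a bridge because its image in the forest `G` is one. Appending one label at the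
bottom of every chain identifies what hangs over `p⃗ᵢ` with what hangs at `ℓ`. Finally, a vertex
acquires new neighbours only when it is a promise leaf, and then its neighbours correspond to
those of the root of `G(p⃗ᵢ)`, so the maximum degree is kept.
-/

namespace SimpleGraph

variable {α β : Type*} {A : SimpleGraph α} {B : SimpleGraph β}

theorem Reachable.map_of_eq_or_adj (f : α → β)
    (hf : ∀ a b, A.Adj a b → f a = f b ∨ B.Adj (f a) (f b)) {a b : α}
    (h : A.Reachable a b) : B.Reachable (f a) (f b) := by
  obtain ⟨w⟩ := h
  induction w with
  | nil => rfl
  | cons hadj _ ih =>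
    rcases hf _ _ hadj with heq | hadj'
    · exact heq ▸ ih
    · exact hadj'.reachable.trans ih

theorem isBridge_of_injOn (hB : B.IsAcyclic) (f : α → β) (S : Set α)
    (hf : ∀ a b, A.Adj a b → f a = f b ∨ (B.Adj (f a) (f b) ∧ a ∈ S ∧ b ∈ S))
    (hS : S.InjOn f) {a b : α} (hab : A.Adj a b) (hne : f a ≠ f b) : A.IsBridge s(a, b) := by
  obtain ⟨hadj, ha, hb⟩ := (hf a b hab).resolve_left hne
  rw [isBridge_iff]
  intro hreach
  refine isBridge_iff.1 (isAcyclic_iff_forall_adj_isBridge.1 hB hadj) ?_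
  refine hreach.map_of_eq_or_adj f fun a' b' h' => ?_
  rw [deleteEdges_adj] at h' ⊢
  refine (hf a' b' h'.1).imp_right fun ⟨hadj', ha', hb'⟩ => ⟨hadj', fun hmem => h'.2 ?_⟩
  rw [Set.mem_singleton_iff, Sym2.eq_iff] at hmem ⊢
  exact hmem.imp (fun ⟨h₁, h₂⟩ => ⟨hS ha' ha h₁, hS hb' hb h₂⟩)
    fun ⟨h₁, h₂⟩ => ⟨hS ha' hb h₁, hS hb' ha h₂⟩

end SimpleGraph

open SimpleGraph

section Branch

variable {V : Type} {G : SimpleGraph V} {x y : V}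

theorem mem_branchSet_self : y ∈ branchSet G x y :=
  Reachable.refl y

theorem notMem_branchSet_of_adj (hG : G.IsAcyclic) (hxy : G.Adj x y) :
    x ∉ branchSet G x y := fun h =>
  isBridge_iff.1 (isAcyclic_iff_forall_adj_isBridge.1 hG hxy) h.symm

theorem branchSet_eq_singleton (h : G.neighborSet y = {x}) : branchSet G x y = {y} := by
  refine Set.eq_singleton_iff_unique_mem.2 ⟨mem_branchSet_self, fun z ⟨w⟩ => ?_⟩
  cases w with
  | nil => rfl
  | cons hadj _ =>
    rw [deleteEdges_adj] at hadj
    have hz : _ ∈ G.neighborSet y := hadj.1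
    rw [h, Set.mem_singleton_iff] at hz
    exact absurd (by simp [hz, Sym2.eq_swap]) hadj.2

theorem neighborSet_eq_singleton_of_isLeaf (hy : IsLeaf G y) (hxy : G.Adj x y) :
    G.neighborSet y = {x} := by
  obtain ⟨z, hz⟩ := Set.ncard_eq_one.1 hy
  have hx : x ∈ G.neighborSet y := hxy.symm
  rw [hz, Set.mem_singleton_iff] at hx
  rw [hz, hx]

theorem branchRootedIso_of_eq_singleton {W : Type} {H : SimpleGraph W} {x' y' : W}
    (h : branchSet G x y = {y}) (h' : branchSet H x' y' = {y'}) :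
    BranchRootedIso G x y H x' y' := by
  rw [BranchRootedIso, h, h']
  exact ⟨⟨Equiv.ofUnique _ _, fun {a b} => by simp [Subsingleton.elim a b]⟩, fun _ => rfl⟩

end Branch

structure PromiseStructure (V I : Type) where
  G : SimpleGraph V
  isAcyclic : G.IsAcyclic
  p : I → V × V
  adj_p : ∀ i, G.Adj (p i).1 (p i).2
  L : I → Set V
  isLeaf : ∀ i, ∀ ℓ ∈ L i, IsLeaf G ℓ
  disjoint : Pairwise fun i j => Disjoint (L i) (L j)

namespace PromiseStructure

open scoped Classical
open Relation

variable {V I : Type} (P : PromiseStructure V I)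

/-- The leaves at which the closure glues copies: `ℓ ∈ Lᵢ` for a promise `p⃗ᵢ` that is not a
placeholder. -/
@[ext]
structure Label where
  idx : I
  leaf : V
  leaf_mem : leaf ∈ P.L idx
  not_isPlaceholder : ¬ IsPlaceholder P.G P.p P.L idx

variable {P}

namespace Label

def src (d : P.Label) : V := (P.p d.idx).1

def root (d : P.Label) : V := (P.p d.idx).2

def branch (d : P.Label) : Set V := branchSet P.G d.src d.root

theorem adj_src_root (d : P.Label) : P.G.Adj d.src d.root := P.adj_p d.idx

theorem root_mem_branch (d : P.Label) : d.root ∈ d.branch := mem_branchSet_self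

theorem src_notMem_branch (d : P.Label) : d.src ∉ d.branch :=
  notMem_branchSet_of_adj P.isAcyclic d.adj_src_root

theorem isLeaf_leaf (d : P.Label) : IsLeaf P.G d.leaf := P.isLeaf _ _ d.leaf_mem

theorem idx_eq_of_leaf_mem (d : P.Label) {i : I} (h : d.leaf ∈ P.L i) : d.idx = i := by
  by_contra hne
  exact Set.not_disjoint_iff.2 ⟨d.leaf, d.leaf_mem, h⟩ (P.disjoint hne)

theorem leaf_injective : Function.Injective (Label.leaf : P.Label → V) := fun d e h =>
  Label.ext (d.idx_eq_of_leaf_mem (h ▸ e.leaf_mem)) h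

theorem leaf_ne_root {d e : P.Label} {x : V} (hx : x ∈ e.branch) (hxr : x ≠ e.root) :
    d.leaf ≠ e.root := by
  intro h
  have hsingle : e.branch = {e.root} := branchSet_eq_singleton
    (neighborSet_eq_singleton_of_isLeaf (h ▸ d.isLeaf_leaf) e.adj_src_root)
  rw [hsingle] at hx
  exact hxr hx

end Label

variable (P)

/-- A chain `[dₖ, …, d₁]` describes the copy of `G(p⃗_{dₖ})` obtained by gluing a copy of
`G(p⃗_{d₁})` at the leaf `d₁.leaf` of `G`, then a copy of `G(p⃗_{d₂})` at the copy of
`d₂.leaf` inside it, and so on; a copy is glued by identifying its root with the leaf. -/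
def IsChain (s : List P.Label) : Prop := s.IsChain fun d e => d.leaf ∈ e.branch

/-- `(s, v)` is the copy of `v` in the copy described by `s`; roots of copies are excluded since
they are identified with the leaf they are glued at. -/
def IsVertex : List P.Label × V → Prop
  | ([], _) => True
  | (d :: t, v) => v ∈ d.branch ∧ v ≠ d.root ∧ P.IsChain (d :: t)

def Closure : Type := {x : List P.Label × V // P.IsVertex x}

/-- The vertex of the closure represented by `(s, v)`, resolving the identification of roots
with leaves. -/
noncomputable def normalize : List P.Label → V → List P.Label × V
  | [], v => ([], v)
  | e :: t, v => if v = e.root then normalize t e.leaf else (e :: t, v)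

/-- `b` is a neighbour of the root of its copy, and `a` is the vertex that root is
identified with. -/
def Glue (a b : List P.Label × V) : Prop :=
  ∃ d c, b.1 = d :: c ∧ a = P.normalize c d.leaf ∧ P.G.Adj d.root b.2

def Adj (a b : List P.Label × V) : Prop :=
  (a.1 = b.1 ∧ P.G.Adj a.2 b.2) ∨ P.Glue a b ∨ P.Glue b a

variable {P}

@[simp]
theorem normalize_nil (v : V) : P.normalize [] v = ([], v) := rfl

theorem normalize_cons (e : P.Label) (t : List P.Label) (v : V) :
    P.normalize (e :: t) v = if v = e.root then P.normalize t e.leaf else (e :: t, v) := rfl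

theorem normalize_cons_root (e : P.Label) (t : List P.Label) :
    P.normalize (e :: t) e.root = P.normalize t e.leaf := if_pos rfl

theorem length_normalize_le (s : List P.Label) (v : V) : (P.normalize s v).1.length ≤ s.length := by
  induction s generalizing v with
  | nil => rfl
  | cons e t ih =>
    rw [normalize_cons]
    split
    · exact (ih _).trans (Nat.le_succ _)
    · exact le_rfl

theorem not_glue_self (a : List P.Label × V) : ¬ P.Glue a a := by
  rintro ⟨d, c, hc, ha, -⟩
  have := length_normalize_le c d.leaf
  rw [← ha, hc, List.length_cons] at this
  omega

theorem Adj.symm {a b : List P.Label × V} (h : P.Adj a b) : P.Adj b a := by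
  rcases h with ⟨h₁, h₂⟩ | h | h
  exacts [Or.inl ⟨h₁.symm, h₂.symm⟩, Or.inr (Or.inr h), Or.inr (Or.inl h)]

theorem not_adj_self (a : List P.Label × V) : ¬ P.Adj a a := by
  rintro (⟨-, h⟩ | h | h)
  exacts [P.G.loopless.irrefl _ h, not_glue_self a h, not_glue_self a h]

variable (P)

noncomputable def closure : SimpleGraph P.Closure where
  Adj a b := P.Adj a.1 b.1
  symm := ⟨fun _ _ h => Adj.symm h⟩
  loopless := ⟨fun a h => not_adj_self a.1 h⟩

def embed : V ↪ P.Closure :=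
  ⟨fun v => ⟨([], v), trivial⟩, fun _ _ h => congrArg (fun w : P.Closure => w.1.2) h⟩

variable {P}

theorem Closure.ext {a b : P.Closure} (h : a.1 = b.1) : a = b := Subtype.ext h

theorem IsVertex.of_cons {x : List P.Label × V} (hx : P.IsVertex x) {d : P.Label}
    {t : List P.Label} (h : x.1 = d :: t) : x.2 ∈ d.branch ∧ x.2 ≠ d.root ∧ P.IsChain (d :: t) := by
  obtain ⟨s, v⟩ := x
  subst h
  exact hx

/-! ### Retractions onto copies -/

variable (P)

/-- `above c s = some f` iff `s = u ++ f :: c` for some `u`. -/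
noncomputable def above (c : List P.Label) : List P.Label → Option P.Label
  | [] => none
  | f :: t => if t = c then some f else above c t

/-- The retraction of the closure onto the copy described by `c`: a vertex lying in a copy glued,
directly or not, into copy `c` goes to the leaf carrying that copy, every other vertex goes to the
root of copy `c`. -/
noncomputable def proj (c : List P.Label) (x : List P.Label × V) : V :=
  if x.1 = c then x.2 else
    match P.above c x.1 with
    | some f => f.leaf
    | none => (c.head?.map Label.root).getD x.2

/-- The vertices of the copy described by `c`, its root being represented by the vertex it is
identified with. -/
def copy (c : List P.Label) : Set (List P.Label × V) :=
  {x | x.1 = c ∨ ∃ d t, c = d :: t ∧ x = P.normalize t d.leaf}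

variable {P}

theorem above_cons (c : List P.Label) (f : P.Label) (t : List P.Label) :
    P.above c (f :: t) = if t = c then some f else P.above c t := rfl

theorem above_eq_none_of_length_le {c s : List P.Label} (h : s.length ≤ c.length) :
    P.above c s = none := by
  induction s with
  | nil => rfl
  | cons f t ih =>
    rw [List.length_cons] at h
    rw [above_cons, if_neg (by rintro rfl; omega), ih (by omega)]

theorem above_nil_cons (f : P.Label) (t : List P.Label) : ∃ g, P.above [] (f :: t) = some g := by
  induction t generalizing f with
  | nil => exact ⟨f, rfl⟩
  | cons f' t ih => simpa [above_cons] using ih f'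

theorem eq_nil_of_above_nil_eq_none {s : List P.Label} (h : P.above [] s = none) : s = [] := by
  cases s with
  | nil => rfl
  | cons f t => obtain ⟨g, hg⟩ := above_nil_cons f t; simp [hg] at h

theorem proj_of_fst_eq {c : List P.Label} {x : List P.Label × V} (h : x.1 = c) :
    P.proj c x = x.2 := if_pos h

theorem proj_congr_snd {c s : List P.Label} (h : s ≠ c) (v w : V) :
    P.proj c (s, v) = P.proj c (s, w) := by
  simp only [proj, if_neg h]
  split
  · rfl
  · next hnone =>
    obtain _ | ⟨d, c'⟩ := c
    · exact absurd (eq_nil_of_above_nil_eq_none hnone) h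
    · rfl

theorem proj_cons_root (c : List P.Label) (e : P.Label) (t : List P.Label) :
    P.proj c (e :: t, e.root) = P.proj c (t, e.leaf) := by
  by_cases h₁ : e :: t = c
  · subst h₁
    have hnone : P.above (e :: t) t = none :=
      above_eq_none_of_length_le (by simp only [List.length_cons]; omega)
    simp [proj, hnone]
  by_cases h₂ : t = c
  · simp [proj, h₂, above_cons]
  rw [proj_congr_snd h₁ _ e.leaf, proj_congr_snd h₂ _ e.leaf]
  simp [proj, h₁, h₂, above_cons]

theorem proj_normalize (c s : List P.Label) (v : V) :
    P.proj c (P.normalize s v) = P.proj c (s, v) := by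
  induction s generalizing v with
  | nil => rfl
  | cons e t ih =>
    rw [normalize_cons]
    split
    · next hv => rw [ih, hv, proj_cons_root]
    · rfl

theorem proj_normalize_leaf (d : P.Label) (t : List P.Label) :
    P.proj (d :: t) (P.normalize t d.leaf) = d.root := by
  rw [proj_normalize, ← proj_cons_root]
  exact proj_of_fst_eq rfl

theorem proj_eq_or_adj_of_glue {c : List P.Label} {a b : List P.Label × V} (h : P.Glue a b) :
    P.proj c a = P.proj c b ∨
      (P.G.Adj (P.proj c a) (P.proj c b) ∧ a ∈ P.copy c ∧ b ∈ P.copy c) := by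
  obtain ⟨d, t, hb, rfl, hadj⟩ := h
  by_cases hc : d :: t = c
  · subst hc
    rw [proj_normalize_leaf, proj_of_fst_eq hb]
    exact Or.inr ⟨hadj, Or.inr ⟨d, t, rfl, rfl⟩, Or.inl hb⟩
  · left
    obtain ⟨s, y⟩ := b
    dsimp only at hb
    subst hb
    rw [proj_normalize, ← proj_cons_root, proj_congr_snd hc]

theorem proj_eq_or_adj {c : List P.Label} {a b : List P.Label × V} (h : P.Adj a b) :
    P.proj c a = P.proj c b ∨
      (P.G.Adj (P.proj c a) (P.proj c b) ∧ a ∈ P.copy c ∧ b ∈ P.copy c) := by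
  rcases h with ⟨hfst, hadj⟩ | h | h
  · by_cases hc : a.1 = c
    · rw [proj_of_fst_eq hc, proj_of_fst_eq (hfst ▸ hc)]
      exact Or.inr ⟨hadj, Or.inl hc, Or.inl (hfst ▸ hc)⟩
    · obtain ⟨s, v⟩ := a
      obtain ⟨s', w⟩ := b
      dsimp only at hfst hc
      subst hfst
      exact Or.inl (proj_congr_snd hc v w)
  · exact proj_eq_or_adj_of_glue h
  · rcases proj_eq_or_adj_of_glue (c := c) h with h' | ⟨hadj, hb, ha⟩
    exacts [Or.inl h'.symm, Or.inr ⟨hadj.symm, ha, hb⟩]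

theorem proj_ne_root_of_fst_eq {d : P.Label} {t : List P.Label} {a : P.Closure}
    (ha : a.1.1 = d :: t) : P.proj (d :: t) a.1 ≠ d.root := by
  rw [proj_of_fst_eq ha]
  exact (a.2.of_cons ha).2.1

theorem injOn_proj (c : List P.Label) :
    {w : P.Closure | w.1 ∈ P.copy c}.InjOn fun w => P.proj c w.1 := by
  rintro a (ha | ⟨d, t, rfl, ha⟩) b (hb | ⟨d', t', hc, hb⟩) h <;> dsimp only at h
  · rw [proj_of_fst_eq ha, proj_of_fst_eq hb] at h
    exact Closure.ext (Prod.ext (ha.trans hb.symm) h)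
  · subst hc
    rw [hb, proj_normalize_leaf] at h
    exact absurd h (proj_ne_root_of_fst_eq ha)
  · rw [ha, proj_normalize_leaf] at h
    exact absurd h.symm (proj_ne_root_of_fst_eq hb)
  · obtain ⟨rfl, rfl⟩ := List.cons_eq_cons.1 hc
    exact Closure.ext (ha.trans hb.symm)

theorem exists_proj_ne {a b : P.Closure} (h : P.closure.Adj a b) :
    ∃ c, P.proj c a.1 ≠ P.proj c b.1 := by
  rcases h with ⟨hfst, hadj⟩ | ⟨d, t, hb, ha, -⟩ | ⟨d, t, ha, hb, -⟩
  · refine ⟨a.1.1, ?_⟩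
    rw [proj_of_fst_eq rfl, proj_of_fst_eq hfst.symm]
    exact hadj.ne
  · refine ⟨d :: t, ?_⟩
    rw [ha, proj_normalize_leaf]
    exact (proj_ne_root_of_fst_eq hb).symm
  · refine ⟨d :: t, ?_⟩
    rw [hb, proj_normalize_leaf]
    exact proj_ne_root_of_fst_eq ha

theorem closure_isAcyclic : P.closure.IsAcyclic := by
  refine isAcyclic_iff_forall_adj_isBridge.2 fun a b h => ?_
  obtain ⟨c, hc⟩ := exists_proj_ne h
  exact isBridge_of_injOn P.isAcyclic (fun w => P.proj c w.1) _
    (fun _ _ h' => proj_eq_or_adj h') (injOn_proj c) h hc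

/-! ### The closure as an extension of `G` -/

variable (P)

/-- The vertex of `G` at which the tree of copies containing `x` is attached. -/
noncomputable def base (x : List P.Label × V) : V := P.proj [] x

variable {P}

theorem base_of_fst_eq_nil {x : List P.Label × V} (h : x.1 = []) : P.base x = x.2 :=
  proj_of_fst_eq h

@[simp]
theorem base_nil (v : V) : P.base ([], v) = v := rfl

theorem base_cons (d : P.Label) (t : List P.Label) (v : V) :
    P.base (d :: t, v) = P.base (t, d.leaf) := by
  rw [base, proj_congr_snd (List.cons_ne_nil d t) v d.root]
  exact proj_cons_root [] d t

theorem base_normalize (s : List P.Label) (v : V) : P.base (P.normalize s v) = P.base (s, v) :=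
  proj_normalize [] s v

theorem base_append_singleton (s : List P.Label) (f : P.Label) (v : V) :
    P.base (s ++ [f], v) = f.leaf := by
  induction s generalizing v with
  | nil => exact base_cons f [] v
  | cons d s ih => rw [List.cons_append, base_cons, ih]

theorem exists_eq_append_of_base_eq {s : List P.Label} (hs : s ≠ []) {v : V} {f : P.Label}
    (h : P.base (s, v) = f.leaf) : ∃ t, s = t ++ [f] := by
  refine ⟨s.dropLast, ?_⟩
  have hs' := (List.dropLast_append_getLast hs).symm
  rw [hs', base_append_singleton] at h
  rwa [← Label.leaf_injective h]

theorem base_eq_or_adj {a b : List P.Label × V} (h : P.Adj a b) :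
    P.base a = P.base b ∨ (P.G.Adj (P.base a) (P.base b) ∧ a.1 = [] ∧ b.1 = []) := by
  refine (proj_eq_or_adj h).imp_right fun ⟨hadj, ha, hb⟩ => ⟨hadj, ?_, ?_⟩
  · exact ha.resolve_right fun ⟨_, _, h, _⟩ => (List.cons_ne_nil _ _).symm h
  · exact hb.resolve_right fun ⟨_, _, h, _⟩ => (List.cons_ne_nil _ _).symm h

theorem exists_leaf_eq_normalize_snd (s : List P.Label) (d : P.Label) :
    ∃ f : P.Label, (P.normalize s d.leaf).2 = f.leaf := by
  induction s generalizing d with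
  | nil => exact ⟨d, rfl⟩
  | cons e t ih =>
    rw [normalize_cons]
    split
    · exact ih e
    · exact ⟨d, rfl⟩

theorem isVertex_normalize {s : List P.Label} {v : V} (hs : P.IsChain s)
    (hv : ∀ f ∈ s.head?, v ∈ f.branch) : P.IsVertex (P.normalize s v) := by
  induction s generalizing v with
  | nil => trivial
  | cons e t ih =>
    rw [normalize_cons]
    split
    · exact ih hs.tail fun f hf => (List.isChain_cons.1 hs).1 f hf
    · next hne => exact ⟨hv e rfl, hne, hs⟩

theorem isVertex_normalize_leaf {d : P.Label} {t : List P.Label} (h : P.IsChain (d :: t)) :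
    P.IsVertex (P.normalize t d.leaf) :=
  isVertex_normalize h.tail fun f hf => (List.isChain_cons.1 h).1 f hf

theorem closure_adj_embed (a b : V) : P.closure.Adj (P.embed a) (P.embed b) ↔ P.G.Adj a b := by
  refine ⟨?_, fun h => Or.inl ⟨rfl, h⟩⟩
  rintro (⟨-, h⟩ | ⟨d, t, hc, -⟩ | ⟨d, t, hc, -⟩)
  · exact h
  all_goals exact absurd hc (List.cons_ne_nil _ _).symm

theorem deleteEdges_embed_adj_of_ne_nil {x y : V} {a b : P.Closure} (h : P.closure.Adj a b)
    (ha : a.1.1 ≠ []) : (P.closure.deleteEdges {s(P.embed x, P.embed y)}).Adj a b := by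
  refine (deleteEdges_adj ..).2 ⟨h, fun hmem => ha ?_⟩
  rw [Set.mem_singleton_iff, Sym2.eq_iff] at hmem
  rcases hmem with ⟨rfl, -⟩ | ⟨rfl, -⟩ <;> rfl

theorem reachable_normalize_leaf {d : P.Label} {t : List P.Label} (hc : P.IsChain (d :: t))
    (x y : V) {v : V} (hv : v ∈ d.branch) (hvr : v ≠ d.root) :
    (P.closure.deleteEdges {s(P.embed x, P.embed y)}).Reachable ⟨(d :: t, v), hv, hvr, hc⟩
      ⟨P.normalize t d.leaf, isVertex_normalize_leaf hc⟩ := by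
  suffices ∀ {v r : V} (q : (P.G.deleteEdges {s(d.src, d.root)}).Walk v r), r = d.root →
      ∀ (hv : v ∈ d.branch) (hvr : v ≠ d.root),
      (P.closure.deleteEdges {s(P.embed x, P.embed y)}).Reachable ⟨(d :: t, v), hv, hvr, hc⟩
        ⟨P.normalize t d.leaf, isVertex_normalize_leaf hc⟩ by
    obtain ⟨q⟩ := (show (P.G.deleteEdges {s(d.src, d.root)}).Reachable d.root v from hv).symm
    exact this q rfl hv hvr
  intro v r q
  induction q with
  | nil => exact fun hr _ hvr => absurd hr hvr
  | @cons v b _ hvb q ih =>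
    intro hr hv hvr
    rw [deleteEdges_adj] at hvb
    by_cases hb : b = d.root
    · subst hb
      exact Adj.reachable (deleteEdges_embed_adj_of_ne_nil
        (Or.inr (Or.inr ⟨d, t, rfl, rfl, hvb.1.symm⟩)) (List.cons_ne_nil _ _))
    · have hb' : b ∈ d.branch := ⟨(q.copy rfl hr).reverse⟩
      exact Reachable.trans (Adj.reachable (deleteEdges_embed_adj_of_ne_nil
        (b := ⟨(d :: t, b), hb', hb, hc⟩) (Or.inl ⟨rfl, hvb.1⟩) (List.cons_ne_nil _ _)))
        (ih hr hb' hb)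

theorem eq_embed_base {w : P.Closure} (h : w.1.1 = []) : w = P.embed (P.base w.1) :=
  Closure.ext (Prod.ext h (base_of_fst_eq_nil h).symm)

theorem reachable_embed_base (x y : V) (w : P.Closure) :
    (P.closure.deleteEdges {s(P.embed x, P.embed y)}).Reachable w (P.embed (P.base w.1)) := by
  induction hn : w.1.1.length using Nat.strong_induction_on generalizing w with
  | _ n ih =>
    obtain ⟨⟨_ | ⟨d, t⟩, v⟩, hw⟩ := w
    · rfl
    · obtain ⟨hv, hvr, hc⟩ := hw
      have hlt : (P.normalize t d.leaf).1.length < n := by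
        have := length_normalize_le t d.leaf
        simp only [List.length_cons] at hn
        omega
      have h := ih _ hlt ⟨P.normalize t d.leaf, isVertex_normalize_leaf hc⟩ rfl
      rw [base_normalize, ← base_cons d t v] at h
      exact (reachable_normalize_leaf hc x y hv hvr).trans h

theorem reachable_of_reachable_embed {v v' : V}
    (h : P.closure.Reachable (P.embed v) (P.embed v')) : P.G.Reachable v v' :=
  h.map_of_eq_or_adj (fun w : P.Closure => P.base w.1) fun _ _ hab =>
    (base_eq_or_adj hab).imp_right And.left

theorem exists_embed_leaf_mem_support {w₁ w₂ : P.Closure} (q : P.closure.Walk w₁ w₂)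
    (h₁ : w₁.1.1 = []) (h₂ : w₂.1.1 ≠ []) : ∃ d : P.Label, P.embed d.leaf ∈ q.support := by
  induction q with
  | nil => exact absurd h₁ h₂
  | @cons u m _ hum q ih =>
    by_cases hm : m.1.1 = []
    · obtain ⟨d, hd⟩ := ih hm h₂
      exact ⟨d, List.mem_cons_of_mem _ hd⟩
    rcases hum with ⟨hfst, -⟩ | ⟨d, t, -, hu, -⟩ | ⟨d, t, hu, -⟩
    · exact absurd (hfst ▸ h₁) hm
    · obtain ⟨f, hf⟩ := exists_leaf_eq_normalize_snd t d
      refine ⟨f, ?_⟩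
      have hu' : P.embed f.leaf = u := by
        rw [eq_embed_base h₁, base_of_fst_eq_nil h₁, hu, hf]
      exact hu' ▸ List.mem_cons_self
    · exact absurd (hu ▸ h₁) (List.cons_ne_nil _ _)

theorem branchSet_closure_embed (x y : V) :
    branchSet P.closure (P.embed x) (P.embed y) = {w | P.base w.1 ∈ branchSet P.G x y} := by
  ext w
  constructor
  · intro hw
    refine hw.map_of_eq_or_adj (fun w => P.base w.1) fun a b hab => ?_
    rw [deleteEdges_adj] at hab
    refine (base_eq_or_adj hab.1).imp_right fun ⟨hadj, ha, hb⟩ =>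
      (deleteEdges_adj ..).2 ⟨hadj, fun hmem => hab.2 ?_⟩
    rw [Set.mem_singleton_iff] at hmem ⊢
    rw [eq_embed_base ha, eq_embed_base hb]
    exact congrArg (Sym2.map P.embed) hmem
  · intro hw
    refine (hw.map_of_eq_or_adj P.embed fun a b hab => Or.inr ?_).trans
      (reachable_embed_base x y w).symm
    rw [deleteEdges_adj] at hab ⊢
    refine ⟨(closure_adj_embed a b).2 hab.1, fun hmem => hab.2 ?_⟩
    rw [Set.mem_singleton_iff] at hmem ⊢
    exact Sym2.map.injective P.embed.injective hmem

theorem isLeafExtension :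
    IsLeafExtension P.G P.closure P.embed
      (⋃ i ∈ {i : I | ¬ IsPlaceholder P.G P.p P.L i}, P.L i) := by
  refine ⟨closure_adj_embed, fun w => ⟨P.base w.1, (reachable_embed_base w.1.2 w.1.2 w).mono
    (deleteEdges_le _)⟩, fun _ _ => reachable_of_reachable_embed, fun w hw g q _ => ?_⟩
  obtain ⟨d, hd⟩ := exists_embed_leaf_mem_support q rfl fun h => hw ⟨_, (eq_embed_base h).symm⟩
  exact ⟨d.leaf, Set.mem_biUnion d.not_isPlaceholder d.leaf_mem, hd⟩

/-! ### Shifting into a glued copy -/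

theorem adj_normalize_of_adj (e : P.Label) (t : List P.Label) {u w : V} (h : P.G.Adj u w) :
    P.Adj (P.normalize (e :: t) u) (P.normalize (e :: t) w) := by
  have glue : ∀ {u w : V}, P.G.Adj u w → u = e.root →
      P.Adj (P.normalize (e :: t) u) (P.normalize (e :: t) w) := by
    rintro u w h rfl
    rw [normalize_cons_root, normalize_cons, if_neg h.ne.symm]
    exact Or.inr (Or.inl ⟨e, t, rfl, rfl, h⟩)
  by_cases hu : u = e.root
  · exact glue h hu
  by_cases hw : w = e.root
  · exact (glue h.symm hw).symm
  rw [normalize_cons, normalize_cons, if_neg hu, if_neg hw]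
  exact Or.inl ⟨rfl, h⟩

theorem base_eq_leaf_of_mem_getLast? {s : List P.Label} {f : P.Label} (hf : f ∈ s.getLast?)
    (v : V) : P.base (s, v) = f.leaf := by
  rw [← List.dropLast_append_getLast? f hf, base_append_singleton]

theorem isChain_append_singleton_iff {s : List P.Label} (hs : s ≠ []) (f : P.Label) (v : V) :
    P.IsChain (s ++ [f]) ↔ P.IsChain s ∧ P.base (s, v) ∈ f.branch := by
  obtain ⟨g, hg⟩ := Option.ne_none_iff_exists'.1 (mt List.getLast?_eq_none_iff.1 hs)
  rw [IsChain, List.isChain_append, base_eq_leaf_of_mem_getLast? hg]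
  simp [hg, IsChain]

theorem IsVertex.of_append_singleton {s : List P.Label} {f : P.Label} {v : V}
    (h : P.IsVertex (s ++ [f], v)) (hs : s ≠ []) : P.IsVertex (s, v) := by
  obtain _ | ⟨d, s⟩ := s
  · exact absurd rfl hs
  · exact ⟨h.1, h.2.1, List.IsChain.left_of_append (l₁ := d :: s) h.2.2⟩

section Shift

variable (f₀ : P.Label)

/-- Moves a vertex attached inside `f₀.branch` to its counterpart in the copy of `f₀.branch`
glued at `f₀.leaf`. -/
noncomputable def shift : List P.Label × V → List P.Label × V
  | ([], v) => P.normalize [f₀] v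
  | (d :: s, v) => (d :: s ++ [f₀], v)

def unshift : List P.Label × V → List P.Label × V
  | ([], _) => ([], f₀.root)
  | (d :: s, v) => ((d :: s).dropLast, v)

variable {f₀}

theorem unshift_append_singleton (s : List P.Label) (v : V) :
    unshift f₀ (s ++ [f₀], v) = (s, v) := by
  obtain _ | ⟨d, s⟩ := s
  · rfl
  · show (((d :: s) ++ [f₀]).dropLast, v) = _
    rw [List.dropLast_concat]

theorem normalize_append_singleton (s : List P.Label) (v : V) :
    P.normalize (s ++ [f₀]) v = shift f₀ (P.normalize s v) := by
  induction s generalizing v with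
  | nil => rfl
  | cons e s ih =>
    rw [List.cons_append, normalize_cons, normalize_cons]
    split
    · exact ih _
    · rfl

theorem unshift_shift (x : List P.Label × V) : unshift f₀ (shift f₀ x) = x := by
  obtain ⟨_ | ⟨d, s⟩, v⟩ := x
  · by_cases hv : v = f₀.root
    · simp [shift, unshift, normalize_cons, hv]
    · simp [shift, unshift, normalize_cons, hv]
  · exact unshift_append_singleton (d :: s) v

theorem base_shift (x : List P.Label × V) : P.base (shift f₀ x) = f₀.leaf := by
  obtain ⟨_ | ⟨d, s⟩, v⟩ := x
  · rw [shift, base_normalize]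
    exact base_append_singleton [] f₀ v
  · exact base_append_singleton (d :: s) f₀ v

theorem shift_unshift {x : List P.Label × V} (hx : P.IsVertex x) (hb : P.base x = f₀.leaf) :
    shift f₀ (unshift f₀ x) = x := by
  obtain ⟨_ | ⟨d, s⟩, v⟩ := x
  · simp [unshift, shift, normalize_cons_root, ← hb]
  obtain ⟨t, ht⟩ := exists_eq_append_of_base_eq (List.cons_ne_nil d s) hb
  rw [ht] at hx ⊢
  rw [unshift_append_singleton]
  obtain _ | ⟨d', t⟩ := t
  · simp [shift, normalize_cons, hx.2.1]
  · rfl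

theorem isVertex_shift {x : List P.Label × V} (hx : P.IsVertex x) (hb : P.base x ∈ f₀.branch) :
    P.IsVertex (shift f₀ x) := by
  obtain ⟨_ | ⟨d, s⟩, v⟩ := x
  · exact isVertex_normalize (List.isChain_singleton f₀) fun f hf => by
      obtain rfl := Option.mem_some_iff.1 hf
      exact hb
  · exact ⟨hx.1, hx.2.1, (isChain_append_singleton_iff (List.cons_ne_nil d s) f₀ v).2 ⟨hx.2.2, hb⟩⟩

theorem isVertex_unshift {x : List P.Label × V} (hx : P.IsVertex x) (hb : P.base x = f₀.leaf) :
    P.IsVertex (unshift f₀ x) ∧ P.base (unshift f₀ x) ∈ f₀.branch := by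
  obtain ⟨_ | ⟨d, s⟩, v⟩ := x
  · exact ⟨trivial, f₀.root_mem_branch⟩
  obtain ⟨t, ht⟩ := exists_eq_append_of_base_eq (List.cons_ne_nil d s) hb
  rw [ht] at hx ⊢
  rw [unshift_append_singleton]
  obtain _ | ⟨d', t⟩ := t
  · exact ⟨trivial, hx.1⟩
  · exact ⟨hx.of_append_singleton (List.cons_ne_nil d' t),
      ((isChain_append_singleton_iff (List.cons_ne_nil d' t) f₀ v).1 hx.2.2).2⟩

theorem Glue.shift {a b : List P.Label × V} (h : P.Glue a b) :
    P.Glue (shift f₀ a) (shift f₀ b) := by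
  obtain ⟨d, c, hb, rfl, hadj⟩ := h
  obtain ⟨s, y⟩ := b
  dsimp only at hb hadj
  subst hb
  exact ⟨d, c ++ [f₀], rfl, (normalize_append_singleton c d.leaf).symm, hadj⟩

theorem Adj.shift {a b : List P.Label × V} (h : P.Adj a b) : P.Adj (shift f₀ a) (shift f₀ b) := by
  rcases h with ⟨hfst, hadj⟩ | h | h
  · obtain ⟨_ | ⟨d, s⟩, u⟩ := a <;> obtain ⟨s', w⟩ := b <;> dsimp only at hfst hadj <;> subst hfst
    · exact adj_normalize_of_adj f₀ [] hadj
    · exact Or.inl ⟨rfl, hadj⟩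
  · exact Or.inr (Or.inl h.shift)
  · exact Or.inr (Or.inr h.shift)

theorem Glue.unshift {a b : List P.Label × V} (h : P.Glue a b) (hb : P.base b = f₀.leaf) :
    P.Adj (unshift f₀ a) (unshift f₀ b) := by
  obtain ⟨d, c, hbc, rfl, hadj⟩ := h
  obtain ⟨s, y⟩ := b
  dsimp only at hbc hadj
  subst hbc
  rw [base_cons] at hb
  by_cases hc : c = []
  · subst hc
    obtain rfl := Label.leaf_injective hb
    exact Or.inl ⟨rfl, hadj⟩
  obtain ⟨c, rfl⟩ := exists_eq_append_of_base_eq hc hb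
  refine Or.inr (Or.inl ⟨d, c, ?_, ?_, hadj⟩)
  · rw [← List.cons_append, unshift_append_singleton]
  · rw [normalize_append_singleton, unshift_shift]

theorem Adj.unshift {a b : List P.Label × V} (h : P.Adj a b) (ha : P.base a = f₀.leaf)
    (hb : P.base b = f₀.leaf) : P.Adj (unshift f₀ a) (unshift f₀ b) := by
  rcases h with ⟨hfst, hadj⟩ | h | h
  · obtain ⟨_ | ⟨d, s⟩, u⟩ := a <;> obtain ⟨s', w⟩ := b <;> dsimp only at hfst hadj <;> subst hfst
    · exact absurd (ha.trans hb.symm) hadj.ne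
    · exact Or.inl ⟨rfl, hadj⟩
  · exact h.unshift hb
  · exact (h.unshift ha).symm

variable (f₀)

noncomputable def shiftIso :
    P.closure.induce {w | P.base w.1 ∈ f₀.branch} ≃g
      P.closure.induce {w | P.base w.1 ∈ ({f₀.leaf} : Set V)} where
  toFun w := ⟨⟨shift f₀ w.1.1, isVertex_shift w.1.2 w.2⟩, base_shift w.1.1⟩
  invFun w := ⟨⟨unshift f₀ w.1.1, (isVertex_unshift w.1.2 w.2).1⟩, (isVertex_unshift w.1.2 w.2).2⟩
  left_inv w := Subtype.ext (Closure.ext (unshift_shift w.1.1))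
  right_inv w := Subtype.ext (Closure.ext (shift_unshift w.1.2 w.2))
  map_rel_iff' {a b} := by
    refine ⟨fun h => ?_, fun h => Adj.shift h⟩
    have h' := Adj.unshift (f₀ := f₀) (a := shift f₀ a.1.1) (b := shift f₀ b.1.1) h
      (base_shift a.1.1) (base_shift b.1.1)
    rwa [unshift_shift, unshift_shift] at h'

end Shift

theorem setOf_base_mem_singleton {x : V} (hx : ∀ f : P.Label, f.leaf ≠ x) :
    {w : P.Closure | P.base w.1 ∈ ({x} : Set V)} = {P.embed x} := by
  ext w
  refine ⟨fun (h : P.base w.1 = x) => ?_, fun h => h ▸ rfl⟩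
  by_cases hw : w.1.1 = []
  · exact h ▸ eq_embed_base hw
  · obtain ⟨f, hf⟩ := Option.ne_none_iff_exists'.1 (mt List.getLast?_eq_none_iff.1 hw)
    exact absurd ((base_eq_leaf_of_mem_getLast? hf w.1.2).symm.trans h) (hx f)

theorem branchRootedIso {i : I} {ℓ u : V} (hℓ : ℓ ∈ P.L i) (hu : P.G.neighborSet ℓ = {u}) :
    BranchRootedIso P.closure (P.embed (P.p i).1) (P.embed (P.p i).2)
      P.closure (P.embed u) (P.embed ℓ) := by
  by_cases hi : IsPlaceholder P.G P.p P.L i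
  · have hnot : ∀ {x}, x ∈ P.L i → ∀ f : P.Label, f.leaf ≠ x := fun hx f hf =>
      f.not_isPlaceholder (f.idx_eq_of_leaf_mem (hf ▸ hx) ▸ hi)
    refine branchRootedIso_of_eq_singleton ?_ ?_
    · rw [branchSet_closure_embed, hi.2, setOf_base_mem_singleton (hnot hi.1)]
    · rw [branchSet_closure_embed, branchSet_eq_singleton hu, setOf_base_mem_singleton (hnot hℓ)]
  · let f₀ : P.Label := ⟨i, ℓ, hℓ, hi⟩
    rw [BranchRootedIso, branchSet_closure_embed, branchSet_closure_embed,
      branchSet_eq_singleton hu]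
    exact ⟨shiftIso f₀, fun _ => Closure.ext (normalize_cons_root f₀ [])⟩

/-! ### Degrees -/

variable (P)

/-- One step of `normalize`: the root of a copy is the leaf the copy is glued at. -/
def CollapseStep (x y : List P.Label × V) : Prop :=
  ∃ f s, x = (f :: s, f.root) ∧ y = (s, f.leaf)

variable {P}

theorem reflTransGen_normalize (s : List P.Label) (v : V) :
    ReflTransGen P.CollapseStep (s, v) (P.normalize s v) := by
  induction s generalizing v with
  | nil => rfl
  | cons e t ih =>
    rw [normalize_cons]
    split
    · next hv => exact hv ▸ ReflTransGen.head ⟨e, t, rfl, rfl⟩ (ih _)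
    · rfl

theorem rightUnique_swap_collapseStep : Relator.RightUnique (Function.swap P.CollapseStep) := by
  rintro _ _ _ ⟨f, s, rfl, h⟩ ⟨g, s', rfl, h'⟩
  obtain ⟨rfl, hfg⟩ := Prod.mk.inj (h.symm.trans h')
  rw [Label.leaf_injective hfg]

theorem eq_of_reflTransGen_collapseStep {x : List P.Label × V} {e : P.Label} {t : List P.Label}
    {y : V} (hy : P.IsVertex (e :: t, y)) (h : ReflTransGen P.CollapseStep x (e :: t, e.root)) :
    x = (e :: t, e.root) := by
  rcases h.cases_tail with h | ⟨_, -, f, s, -, hstep⟩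
  · exact h.symm
  · exact absurd (Prod.mk.inj hstep).2.symm (Label.leaf_ne_root hy.1 hy.2.1)

theorem reflTransGen_collapseStep_of_glue {a b : List P.Label × V} (h : P.Glue a b) :
    ∃ e t, b.1 = e :: t ∧ ReflTransGen P.CollapseStep (e :: t, e.root) a := by
  obtain ⟨e, t, hb, rfl, -⟩ := h
  exact ⟨e, t, hb, normalize_cons_root e t ▸ reflTransGen_normalize (e :: t) e.root⟩

/-- All copies glued at a vertex hang in the same copy, since the collapse steps leading to a
vertex form a single chain. -/
theorem fst_eq_of_glue {w z₁ z₂ : P.Closure} (h₁ : P.Glue w.1 z₁.1) (h₂ : P.Glue w.1 z₂.1) :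
    z₁.1.1 = z₂.1.1 := by
  obtain ⟨e₁, t₁, hz₁, r₁⟩ := reflTransGen_collapseStep_of_glue h₁
  obtain ⟨e₂, t₂, hz₂, r₂⟩ := reflTransGen_collapseStep_of_glue h₂
  have hv₁ : P.IsVertex (e₁ :: t₁, z₁.1.2) := hz₁ ▸ z₁.2
  have hv₂ : P.IsVertex (e₂ :: t₂, z₂.1.2) := hz₂ ▸ z₂.2
  rw [hz₁, hz₂]
  rcases ReflTransGen.total_of_right_unique rightUnique_swap_collapseStep
    (reflTransGen_swap.2 r₁) (reflTransGen_swap.2 r₂) with h | h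
  · exact congrArg Prod.fst (eq_of_reflTransGen_collapseStep hv₁ (reflTransGen_swap.1 h)).symm
  · exact congrArg Prod.fst (eq_of_reflTransGen_collapseStep hv₂ (reflTransGen_swap.1 h))

theorem mem_copy_and_adj_of_not_glue {w z : P.Closure} (h : P.closure.Adj w z)
    (hz : ¬ P.Glue w.1 z.1) : z.1 ∈ P.copy w.1.1 ∧ P.G.Adj w.1.2 (P.proj w.1.1 z.1) := by
  rcases h with ⟨hfst, hadj⟩ | h | ⟨d, t, hw, hz, hadj⟩
  · rw [proj_of_fst_eq hfst.symm]
    exact ⟨Or.inl hfst.symm, hadj⟩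
  · exact absurd h hz
  · rw [hw, hz, proj_normalize_leaf]
    exact ⟨Or.inr ⟨d, t, rfl, rfl⟩, hadj.symm⟩

theorem exists_neighborSet_eq_singleton_of_glue {a b : List P.Label × V} (h : P.Glue a b) :
    ∃ u, P.G.neighborSet a.2 = {u} := by
  obtain ⟨d, c, -, rfl, -⟩ := h
  obtain ⟨f, hf⟩ := exists_leaf_eq_normalize_snd c d
  rw [hf]
  exact Set.ncard_eq_one.1 f.isLeaf_leaf

theorem mk_neighborSet_le_of_forall_not_glue {w : P.Closure}
    (h : ∀ z : P.Closure, ¬ P.Glue w.1 z.1) :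
    Cardinal.mk (P.closure.neighborSet w) ≤ Cardinal.mk (P.G.neighborSet w.1.2) :=
  Cardinal.mk_le_of_injective ((Set.MapsTo.restrict_inj (f := fun z => P.proj w.1.1 z.1)
    fun z hz => (mem_copy_and_adj_of_not_glue hz (h z)).2).2
    fun z₁ hz₁ z₂ hz₂ => injOn_proj w.1.1 (mem_copy_and_adj_of_not_glue hz₁ (h z₁)).1
      (mem_copy_and_adj_of_not_glue hz₂ (h z₂)).1)

/-- A vertex at which copies are glued is a leaf of `G`, and all these copies are the copy
`e₀ :: t₀`: its neighbours there are neighbours of `e₀.root` other than `e₀.src`, which is left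
for its one other neighbour. -/
theorem mk_neighborSet_le_of_glue {w z₀ : P.Closure} (hz₀ : P.Glue w.1 z₀.1) {e₀ : P.Label}
    {t₀ : List P.Label} (he₀ : z₀.1.1 = e₀ :: t₀) :
    Cardinal.mk (P.closure.neighborSet w) ≤ Cardinal.mk (P.G.neighborSet e₀.root) := by
  classical
  obtain ⟨u₀, hu₀⟩ := exists_neighborSet_eq_singleton_of_glue hz₀
  have hglued : ∀ {z : P.Closure}, P.Glue w.1 z.1 →
      z.1.1 = e₀ :: t₀ ∧ P.G.Adj e₀.root z.1.2 := by
    intro z hz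
    have hfst := (fst_eq_of_glue hz hz₀).trans he₀
    obtain ⟨e, t, he, -, hadj⟩ := hz
    obtain ⟨rfl, -⟩ := List.cons_eq_cons.1 (he.symm.trans hfst)
    exact ⟨hfst, hadj⟩
  have hsrc : ∀ {z : P.Closure}, P.Glue w.1 z.1 → z.1.2 ≠ e₀.src := by
    intro z hz h
    exact e₀.src_notMem_branch (h ▸ (z.2.of_cons (hglued hz).1).1)
  have hother : ∀ {z : P.Closure}, P.closure.Adj w z → ¬ P.Glue w.1 z.1 →
      P.proj w.1.1 z.1 = u₀ := by
    intro z hz hg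
    have := (mem_copy_and_adj_of_not_glue hz hg).2
    rwa [← mem_neighborSet, hu₀, Set.mem_singleton_iff] at this
  refine Cardinal.mk_le_of_injective ((Set.MapsTo.restrict_inj
    (f := fun z => if P.Glue w.1 z.1 then z.1.2 else e₀.src) fun z _ => ?_).2
    fun z₁ hz₁ z₂ hz₂ h => ?_)
  · dsimp only
    split
    · exact (hglued ‹_›).2
    · exact e₀.adj_src_root.symm
  · dsimp only at h
    by_cases g₁ : P.Glue w.1 z₁.1 <;> by_cases g₂ : P.Glue w.1 z₂.1 <;>
      simp only [g₁, g₂, if_true, if_false] at h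
    · exact Closure.ext (Prod.ext ((hglued g₁).1.trans (hglued g₂).1.symm) h)
    · exact absurd h (hsrc g₁)
    · exact absurd h.symm (hsrc g₂)
    · exact injOn_proj w.1.1 (mem_copy_and_adj_of_not_glue hz₁ g₁).1
        (mem_copy_and_adj_of_not_glue hz₂ g₂).1 ((hother hz₁ g₁).trans (hother hz₂ g₂).symm)

theorem exists_mk_neighborSet_le (w : P.Closure) :
    ∃ v : V, Cardinal.mk (P.closure.neighborSet w) ≤ Cardinal.mk (P.G.neighborSet v) := by
  by_cases h : ∃ z : P.Closure, P.Glue w.1 z.1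
  · obtain ⟨z₀, hz₀⟩ := h
    obtain ⟨e₀, t₀, he₀, -⟩ := id hz₀
    exact ⟨e₀.root, mk_neighborSet_le_of_glue hz₀ he₀⟩
  · exact ⟨w.1.2, mk_neighborSet_le_of_forall_not_glue (not_exists.1 h)⟩

theorem mk_neighborSet_le_embed (v : V) :
    Cardinal.mk (P.G.neighborSet v) ≤ Cardinal.mk (P.closure.neighborSet (P.embed v)) :=
  Cardinal.mk_le_of_injective (f := fun u => ⟨P.embed u, (closure_adj_embed v u).2 u.2⟩)
    fun _ _ h => Subtype.ext (P.embed.injective (congrArg Subtype.val h))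

theorem iSup_mk_neighborSet_eq : (⨆ v : V, Cardinal.mk (P.G.neighborSet v)) =
    ⨆ w : P.Closure, Cardinal.mk (P.closure.neighborSet w) := by
  refine le_antisymm (ciSup_le' fun v => ?_) (ciSup_le' fun w => ?_)
  · exact (mk_neighborSet_le_embed v).trans (le_ciSup Cardinal.bddAbove_of_small (P.embed v))
  · obtain ⟨v, hv⟩ := exists_mk_neighborSet_le w
    exact hv.trans (le_ciSup Cardinal.bddAbove_of_small v)

end PromiseStructure

/-- Closure of a forest with respect to a promise structure: given a promise structure
`(G, P⃗, 𝓛)` on a forest `G`, there is a forest `cl(G) ⊇ G` (with `G` induced) which is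
an `𝓛_q`-extension of `G`, in which for every promise edge `p⃗ᵢ` and every promise leaf
`ℓ ∈ Lᵢ` the rooted trees `cl(G)(p⃗ᵢ)` and `cl(G)(q⃗_ℓ)` are isomorphic as rooted trees,
and which has the same maximum degree as `G`. -/
theorem exists_promise_closure {V I : Type} (G : SimpleGraph V) (hG : G.IsAcyclic)
    (p : I → V × V) (hp : ∀ i, G.Adj (p i).1 (p i).2)
    (L : I → Set V) (hleaf : ∀ i, ∀ ℓ ∈ L i, IsLeaf G ℓ)
    (hdisj : Pairwise fun i j => Disjoint (L i) (L j)) :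
    ∃ (W : Type) (H : SimpleGraph W) (ι : V ↪ W),
      H.IsAcyclic ∧
      IsLeafExtension G H ι (⋃ i ∈ {i : I | ¬ IsPlaceholder G p L i}, L i) ∧
      (∀ i : I, ∀ ℓ ∈ L i, ∀ u : V, G.neighborSet ℓ = {u} →
        BranchRootedIso H (ι (p i).1) (ι (p i).2) H (ι u) (ι ℓ)) ∧
      (⨆ v : V, Cardinal.mk ↥(G.neighborSet v)) =
        (⨆ w : W, Cardinal.mk ↥(H.neighborSet w)) := by
  let P : PromiseStructure V I := ⟨G, hG, p, hp, L, hleaf, hdisj⟩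
  exact ⟨P.Closure, P.closure, P.embed, P.closure_isAcyclic, P.isLeafExtension,
    fun i ℓ hℓ u hu => P.branchRootedIso hℓ hu, P.iSup_mk_neighborSet_eq⟩
end

section
/- Let G be the tree in which every vertex has countably infinite degree. Then for every vertex v of G, the induced subgraph G − v is isomorphic to the disjoint union of countably infinitely many copies of G; likewise, for every vertex w of the graph H = G ⊔ G (the disjoint union of two copies of G), the induced subgraph H − w is isomorphic to the disjoint union of countably infinitely many copies of G. -/
/-!
Every tree `G` whose vertices all have degree `ℵ₀` is isomorphic to the tree of finite sequences
of naturals, `l` being joined to each `n :: l`, by an isomorphism sending `[]` to any prescribed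
vertex `r`: send `n :: l` to the `n`-th neighbour of the image of `l` other than the image of
`l.tail`. Distances from `r` then equal list lengths, which gives injectivity, and connectedness
gives surjectivity. In the sequence tree, deleting `[]` leaves one copy of the tree for each last
entry `n` (the sequences ending in `n`), so `G − r` is countably many copies of `G`. For `G ⊔ G`,
deleting a vertex leaves countably many copies plus one more, which is still countably many.
-/

/-- The disjoint union of countably infinitely many copies of `G`, one for each
natural number. -/
def countableCopies {V : Type} (G : SimpleGraph V) : SimpleGraph (ℕ × V) where
  Adj a b := a.1 = b.1 ∧ G.Adj a.2 b.2
  symm := ⟨fun a b h => ⟨h.1.symm, h.2.symm⟩⟩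
  loopless := ⟨fun a h => G.loopless.irrefl a.2 h.2⟩

open SimpleGraph Cardinal

def listTree : SimpleGraph (List ℕ) := SimpleGraph.fromRel fun a b => ∃ n, b = n :: a

lemma listTree_adj {a b : List ℕ} :
    listTree.Adj a b ↔ (∃ n, b = n :: a) ∨ ∃ n, a = n :: b := by
  rw [listTree, fromRel_adj, and_iff_right_iff_imp]
  rintro (⟨n, rfl⟩ | ⟨n, rfl⟩)
  exacts [(List.cons_ne_self n a).symm, List.cons_ne_self n b]

lemma listTree_adj_append_singleton {s t : List ℕ} {m n : ℕ} :
    listTree.Adj (s ++ [m]) (t ++ [n]) ↔ m = n ∧ listTree.Adj s t := by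
  have hsnoc (a b : List ℕ) (x y k : ℕ) : a ++ [x] = k :: (b ++ [y]) ↔ a = k :: b ∧ x = y := by
    rw [← List.cons_append, List.append_singleton_inj]
  simp only [listTree_adj, hsnoc]
  grind

namespace SimpleGraph

variable {α β V : Type*} {A : SimpleGraph α} {B : SimpleGraph β} {G : SimpleGraph V}

def Iso.induceComplSingleton (φ : A ≃g B) {a : α} {b : β} (h : φ a = b) :
    A.induce {a}ᶜ ≃g B.induce {b}ᶜ :=
  φ.induce ((Set.bijOn_singleton.mpr h).compl φ.bijective)

def induceComplInlIso (A : SimpleGraph α) (B : SimpleGraph β) (a : α) :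
    (A ⊕g B).induce {Sum.inl a}ᶜ ≃g A.induce {a}ᶜ ⊕g B where
  toFun
    | ⟨.inl x, h⟩ => .inl ⟨x, fun hx => h (congrArg Sum.inl hx)⟩
    | ⟨.inr y, _⟩ => .inr y
  invFun := Sum.elim (fun x => ⟨.inl x, fun h => x.2 (Sum.inl_injective h)⟩)
    fun y => ⟨.inr y, Sum.inr_ne_inl⟩
  left_inv := by rintro ⟨x | y, h⟩ <;> rfl
  right_inv := by rintro (x | y) <;> rfl
  map_rel_iff' := by rintro ⟨x | y, _⟩ ⟨x' | y', _⟩ <;> simp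

theorem Hom.surjective_of_lift_adj (f : A →g B) (hB : B.Preconnected) (a₀ : α)
    (hlift : ∀ a u, B.Adj (f a) u → ∃ b, A.Adj a b ∧ f b = u) : Function.Surjective f := by
  intro u
  suffices ∀ {x y} (_ : B.Walk x y), x ∈ Set.range f → y ∈ Set.range f from
    this (hB (f a₀) u).some ⟨a₀, rfl⟩
  intro x y p
  induction p with
  | nil => exact id
  | cons h _ ih =>
    rintro ⟨a, rfl⟩
    obtain ⟨b, -, rfl⟩ := hlift a _ h
    exact ih ⟨b, rfl⟩

noncomputable def Hom.isoOfLiftAdj [Nonempty α] (f : A →g B) (hB : B.Preconnected)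
    (hf : Function.Injective f) (hlift : ∀ a u, B.Adj (f a) u → ∃ b, A.Adj a b ∧ f b = u) :
    A ≃g B where
  toEquiv := .ofBijective f ⟨hf, f.surjective_of_lift_adj hB (Classical.arbitrary α) hlift⟩
  map_rel_iff' {a b} := by
    refine ⟨fun h => ?_, f.map_adj⟩
    obtain ⟨b', hab', hb'⟩ := hlift a (f b) h
    exact hf hb' ▸ hab'

theorem IsTree.eq_penultimate_of_adj_of_dist_add_one (hT : G.IsTree) {r x u : V}
    {q : G.Walk r x} (hq : q.IsPath) (hxu : G.Adj x u)
    (hu : G.dist r u + 1 = G.dist r x) : u = q.penultimate := by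
  classical
  refine hT.isAcyclic.eq_penultimate_of_adj_end hq hxu ?_
  by_contra hnot
  obtain ⟨p, hp, hpl⟩ := (hT.connected r u).exists_path_of_dist
  have hx := hT.isAcyclic.mem_support_of_ne_mem_support_of_adj_of_isPath hp hq hxu.symm hnot
  have := G.dist_le (p.takeUntil x hx)
  have := p.length_takeUntil_le_length hx
  omega

theorem IsTree.eq_of_adj_of_dist_add_one (hT : G.IsTree) (r : V) {x u w : V}
    (hu : G.Adj x u) (hw : G.Adj x w) (hdu : G.dist r u + 1 = G.dist r x)
    (hdw : G.dist r w + 1 = G.dist r x) : u = w := by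
  obtain ⟨q, hq, -⟩ := hT.existsUnique_path r x
  rw [hT.eq_penultimate_of_adj_of_dist_add_one hq hu hdu,
    hT.eq_penultimate_of_adj_of_dist_add_one hq hw hdw]

lemma nonempty_equiv_neighborSet_diff_singleton {v : V} (hv : #(G.neighborSet v) = ℵ₀)
    (p : V) : Nonempty (ℕ ≃ ↥(G.neighborSet v \ {p})) := by
  have : Infinite (G.neighborSet v) := Cardinal.infinite_iff.mpr hv.ge
  have : Countable (G.neighborSet v) := Cardinal.mk_le_aleph0_iff.mp hv.le
  have : Infinite ↥(G.neighborSet v \ {p}) :=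
    ((G.neighborSet v).infinite_coe_iff.mp ‹_›).sdiff (Set.finite_singleton p) |>.to_subtype
  have : Countable ↥(G.neighborSet v \ {p}) := Set.Countable.mono Set.sdiff_subset ‹_›
  infer_instance

section ListTreeMap

variable (e : ∀ v p : V, ℕ ≃ ↥(G.neighborSet v \ {p})) (r : V)

/-- The root `[]` goes to `r`, which counts as its own parent. -/
noncomputable def listTreeMap : List ℕ → V
  | [] => r
  | [n] => e r r n
  | n :: m :: l => e (listTreeMap (m :: l)) (listTreeMap l) n

variable {e r}

lemma listTreeMap_cons (n : ℕ) (l : List ℕ) :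
    listTreeMap e r (n :: l) = e (listTreeMap e r l) (listTreeMap e r l.tail) n := by
  cases l <;> rfl

lemma listTreeMap_cons_mem (n : ℕ) (l : List ℕ) :
    listTreeMap e r (n :: l) ∈ G.neighborSet (listTreeMap e r l) \ {listTreeMap e r l.tail} := by
  rw [listTreeMap_cons]
  exact Subtype.prop _

lemma listTreeMap_map_adj {a b : List ℕ} (h : listTree.Adj a b) :
    G.Adj (listTreeMap e r a) (listTreeMap e r b) := by
  rcases listTree_adj.mp h with ⟨n, rfl⟩ | ⟨n, rfl⟩
  exacts [(listTreeMap_cons_mem n a).1, (listTreeMap_cons_mem n b).1.symm]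

lemma exists_listTreeMap_eq_of_adj {l : List ℕ} {u : V} (h : G.Adj (listTreeMap e r l) u) :
    ∃ b, listTree.Adj l b ∧ listTreeMap e r b = u := by
  by_cases hu : u = listTreeMap e r l.tail
  · cases l with
    | nil => exact absurd hu h.ne'
    | cons n l => exact ⟨l, listTree_adj.mpr (.inr ⟨n, rfl⟩), hu.symm⟩
  · refine ⟨(e _ _).symm ⟨u, h, hu⟩ :: l, listTree_adj.mpr (.inl ⟨_, rfl⟩), ?_⟩
    rw [listTreeMap_cons, Equiv.apply_symm_apply]

theorem IsTree.dist_listTreeMap (hT : G.IsTree) :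
    ∀ l : List ℕ, G.dist r (listTreeMap e r l) = l.length
  | [] => G.dist_self
  | n :: l => by
    have ih := hT.dist_listTreeMap l
    obtain ⟨hadj, hne⟩ := listTreeMap_cons_mem (e := e) (r := r) n l
    rcases hT.dist_eq_dist_add_one_of_adj r hadj with hd | hd
    · cases l with
      | nil => simp [listTreeMap] at hd
      | cons m k =>
        have hk := hT.dist_listTreeMap k
        have hkadj := (listTreeMap_cons_mem (e := e) (r := r) m k).1.symm
        refine absurd (hT.eq_of_adj_of_dist_add_one r hadj hkadj hd.symm ?_) hne
        rw [ih, hk, List.length_cons]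
    · simp [hd, ih]

theorem IsTree.listTreeMap_injective (hT : G.IsTree) : Function.Injective (listTreeMap e r) := by
  intro a b hab
  have hlen : a.length = b.length := by
    simpa only [hT.dist_listTreeMap] using congrArg (G.dist r) hab
  induction a generalizing b with
  | nil => exact (List.eq_nil_of_length_eq_zero hlen.symm).symm
  | cons m k ih =>
    obtain ⟨n, l, rfl⟩ := List.exists_cons_of_length_eq_add_one hlen.symm
    have hparent : listTreeMap e r k = listTreeMap e r l :=
      hT.eq_of_adj_of_dist_add_one r (listTreeMap_cons_mem m k).1.symm
        (hab ▸ (listTreeMap_cons_mem n l).1.symm) (by simp [hT.dist_listTreeMap])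
        (by simp [hT.dist_listTreeMap, hab])
    obtain rfl := ih hparent (by simpa using hlen)
    rw [listTreeMap_cons, listTreeMap_cons] at hab
    rw [(e _ _).injective (Subtype.ext hab)]

end ListTreeMap

theorem IsTree.exists_iso_listTree (hT : G.IsTree) (hdeg : ∀ v, #(G.neighborSet v) = ℵ₀)
    (r : V) : ∃ φ : listTree ≃g G, φ [] = r := by
  let e v p := Classical.choice (nonempty_equiv_neighborSet_diff_singleton (hdeg v) p)
  let f : listTree →g G := ⟨listTreeMap e r, listTreeMap_map_adj⟩
  exact ⟨f.isoOfLiftAdj hT.connected.preconnected hT.listTreeMap_injective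
    fun _ _ => exists_listTreeMap_eq_of_adj, rfl⟩

end SimpleGraph

section CountableCopies

variable {V W : Type} {G : SimpleGraph V} {H : SimpleGraph W}

def SimpleGraph.Iso.countableCopiesCongr (φ : G ≃g H) :
    countableCopies G ≃g countableCopies H where
  toEquiv := (Equiv.refl ℕ).prodCongr φ.toEquiv
  map_rel_iff' := by simp [countableCopies, φ.map_adj_iff]

variable (G) in
def countableCopiesSumIso : countableCopies G ⊕g G ≃g countableCopies G where
  toFun := Sum.elim (fun p => (p.1 + 1, p.2)) fun v => (0, v)
  invFun
    | (0, v) => .inr v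
    | (n + 1, v) => .inl (n, v)
  left_inv := by rintro (⟨n, v⟩ | v) <;> rfl
  right_inv := by rintro ⟨_ | n, v⟩ <;> rfl
  map_rel_iff' := by rintro (⟨n, a⟩ | a) (⟨m, b⟩ | b) <;> simp [countableCopies]

def listTreeDeleteRootIso : listTree.induce {[]}ᶜ ≃g countableCopies listTree :=
  .symm
  { toFun p := ⟨p.2 ++ [p.1], by simp⟩
    invFun l := (l.1.getLast l.2, l.1.dropLast)
    left_inv _ := Prod.ext List.getLast_concat List.dropLast_concat
    right_inv l := Subtype.ext (List.dropLast_append_getLast l.2)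
    map_rel_iff' := by
      simp [listTree_adj_append_singleton, countableCopies] }

theorem SimpleGraph.IsTree.nonempty_induce_compl_singleton_iso (hT : G.IsTree)
    (hdeg : ∀ v, #(G.neighborSet v) = ℵ₀) (v : V) :
    Nonempty (G.induce {v}ᶜ ≃g countableCopies G) := by
  obtain ⟨φ, hφ⟩ := hT.exists_iso_listTree hdeg v
  exact ⟨(φ.symm.induceComplSingleton (φ.symm_apply_eq.mpr hφ.symm)).trans
    (listTreeDeleteRootIso.trans φ.countableCopiesCongr)⟩

end CountableCopies

/-- Let `G` be the tree in which every vertex has countably infinite degree. Then for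
every vertex `v`, the induced subgraph `G − v` is isomorphic to the disjoint union of
countably infinitely many copies of `G`; likewise, for every vertex `w` of the disjoint
union `H = G ⊔ G`, the induced subgraph `H − w` is isomorphic to the disjoint union of
countably infinitely many copies of `G`. -/
theorem deleteVertex_iso_countableCopies_of_aleph0_regular_tree
    {V : Type} (G : SimpleGraph V) (hT : G.IsTree)
    (hdeg : ∀ v : V, Cardinal.mk ↥(G.neighborSet v) = Cardinal.aleph0) :
    (∀ v : V, Nonempty ((G.induce ({v}ᶜ : Set V)) ≃g countableCopies G)) ∧
    (∀ w : V ⊕ V,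
      Nonempty (((G ⊕g G).induce ({w}ᶜ : Set (V ⊕ V))) ≃g countableCopies G)) := by
  have hdel := hT.nonempty_induce_compl_singleton_iso hdeg
  have hinl (v : V) : Nonempty ((G ⊕g G).induce {Sum.inl v}ᶜ ≃g countableCopies G) :=
    let ⟨φ⟩ := hdel v
    ⟨(induceComplInlIso G G v).trans ((φ.sumCongr .refl).trans (countableCopiesSumIso G))⟩
  refine ⟨hdel, ?_⟩
  rintro (v | v)
  · exact hinl v
  · obtain ⟨φ⟩ := hinl v
    exact ⟨(Iso.sumComm.induceComplSingleton rfl).trans φ⟩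
end
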